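/- H_p norm bound of the example function: for f_n = D_{2^{2n+1}} − D_{2^{2n}} on the dyadic group, the maximal function f_n* = sup_k |S_{2^k} f_n| satisfies f_n* = |f_n|·𝟙 (it equals |D_{2^{2n+1}} − D_{2^{2n}}|), and hence ‖f_n*‖_p ≤ c·2^{2n(1−1/p)} for 0 < p ≤ 1; in particular ‖f_n*‖_{1/2} ≤ c·2^{−2n}. -/

import Mathlib

open Finset

/-- The dyadic group `G = (ℤ/2)^ℕ`. -/
abbrev G := ℕ → ZMod 2

/-- Walsh–Paley functions: `w n x = ∏ k, ((-1)^(x k))^(n_k)` for the binary expansion of `n`. -/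
noncomputable def walsh (n : ℕ) (x : G) : ℝ :=
  ∏ k ∈ Finset.range (n + 1), if n.testBit k then (-1 : ℝ) ^ (x k).val else 1

/-- Walsh–Dirichlet kernels `D m = ∑_{k<m} w k`. -/
noncomputable def dirichlet (m : ℕ) (x : G) : ℝ :=
  ∑ k ∈ Finset.range m, walsh k x

/-- Walsh–Fejér kernels `K n = (1/n) ∑_{k<n} D k`. -/
noncomputable def fejer (n : ℕ) (x : G) : ℝ :=
  (1 / (n : ℝ)) * ∑ k ∈ Finset.range n, dirichlet k x

/-- The cylinder set `I_N = {t : t_0 = ⋯ = t_{N-1} = 0}`. -/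
def IN (N : ℕ) : Set G := {t | ∀ j < N, t j = 0}

open MeasureTheory

instance : TopologicalSpace (ZMod 2) := ⊥
instance : DiscreteTopology (ZMod 2) := ⟨rfl⟩
instance : MeasurableSpace G := borel G
instance : BorelSpace G := ⟨rfl⟩

/-- The normalized Haar measure on the compact group `G`. -/
noncomputable def haarG : Measure G :=
  Measure.addHaarMeasure ⟨⟨Set.univ, isCompact_univ⟩, by simp⟩

/-!
Both kernels are dyadic indicators, `D_{2^m} = 2^m 𝟙_{I_m}`, and `f_n = D_{2^{2n+1}} - D_{2^{2n}}`
has Walsh spectrum exactly the block `[2^{2n}, 2^{2n+1})`. Hence `S_{2^k} f_n` vanishes for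
`k ≤ 2n` and equals `f_n` afterwards, so `f_n* = |f_n| = D_{2^{2n}}`. Integrating
`D_{2^m} = ∑_{k<2^m} w_k` gives `2^m |I_m| = 1`, whence `‖D_{2^{2n}}‖_p = 2^{2n} 2^{-2n/p}`.
-/

instance : IsProbabilityMeasure haarG := ⟨Measure.addHaarMeasure_self⟩

instance : haarG.IsAddLeftInvariant := by unfold haarG; infer_instance

lemma walsh_continuous (n : ℕ) : Continuous (walsh n) :=
  continuous_finsetProd _ fun k _ => by
    split_ifs
    · exact (continuous_of_discreteTopology (f := fun z : ZMod 2 => (-1 : ℝ) ^ z.val)).comp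
        (continuous_apply k)
    · exact continuous_const

lemma walsh_integrable (n : ℕ) : Integrable (walsh n) haarG :=
  (walsh_continuous n).integrable_of_hasCompactSupport (HasCompactSupport.of_compactSpace _)

lemma walsh_eq_prod_range {n N : ℕ} (hn : n < 2 ^ N) (x : G) :
    walsh n x = ∏ k ∈ range N, if n.testBit k then (-1 : ℝ) ^ (x k).val else 1 := by
  have hfactor : ∀ M, n < 2 ^ M → ∀ k ∈ range (n + 1 + N), k ∉ range M →
      (if n.testBit k then (-1 : ℝ) ^ (x k).val else 1) = 1 := fun M hM k _ hk => by
    rw [Nat.testBit_lt_two_pow (hM.trans_le (Nat.pow_le_pow_right two_pos (by simpa using hk))),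
      if_neg Bool.false_ne_true]
  have hn' : n < 2 ^ (n + 1) := Nat.lt_two_pow_self.trans (Nat.pow_lt_pow_succ one_lt_two)
  rw [walsh, prod_subset (range_subset_range.2 (by omega)) (hfactor _ hn'),
    prod_subset (range_subset_range.2 (by omega)) (hfactor _ hn)]

lemma walsh_mul (i j : ℕ) (x : G) : walsh i x * walsh j x = walsh (i ^^^ j) x := by
  have hi : i < 2 ^ (i + j) :=
    Nat.lt_two_pow_self.trans_le (Nat.pow_le_pow_right two_pos (by omega))
  have hj : j < 2 ^ (i + j) :=
    Nat.lt_two_pow_self.trans_le (Nat.pow_le_pow_right two_pos (by omega))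
  rw [walsh_eq_prod_range hi, walsh_eq_prod_range hj,
    walsh_eq_prod_range (Nat.xor_lt_two_pow hi hj), ← prod_mul_distrib]
  refine prod_congr rfl fun k _ => ?_
  rcases hi : i.testBit k <;> rcases hj : j.testBit k <;>
    simp [Nat.testBit_xor, hi, hj, ← pow_add, ← two_mul, pow_mul]

lemma walsh_zero (x : G) : walsh 0 x = 1 := by simp [walsh]

lemma walsh_two_pow (m : ℕ) (x : G) : walsh (2 ^ m) x = (-1 : ℝ) ^ (x m).val := by
  rw [walsh_eq_prod_range (Nat.pow_lt_pow_succ one_lt_two), prod_eq_single_of_mem m (by simp)]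
  · simp
  · intro k _ hk
    simp [Nat.testBit_two_pow_of_ne (Ne.symm hk)]

lemma two_pow_xor_eq_add {m i : ℕ} (h : i < 2 ^ m) : 2 ^ m ^^^ i = 2 ^ m + i := by
  refine Nat.eq_of_testBit_eq fun k => ?_
  rcases lt_trichotomy k m with hk | rfl | hk
  · simp [Nat.testBit_two_pow_of_ne hk.ne', Nat.testBit_two_pow_add_gt hk]
  · simp [Nat.testBit_two_pow_add_eq, Nat.testBit_lt_two_pow h]
  · have hsum : 2 ^ m + i < 2 ^ k := by
      have := Nat.pow_le_pow_right two_pos (Nat.succ_le_of_lt hk)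
      rw [pow_succ] at this
      omega
    rw [Nat.testBit_xor, Nat.testBit_two_pow_of_ne hk.ne, Nat.testBit_lt_two_pow hsum,
      Nat.testBit_lt_two_pow (h.trans (Nat.pow_lt_pow_right one_lt_two hk))]
    rfl

lemma walsh_two_pow_add {m i : ℕ} (h : i < 2 ^ m) (x : G) :
    walsh (2 ^ m + i) x = (-1 : ℝ) ^ (x m).val * walsh i x := by
  rw [← two_pow_xor_eq_add h, ← walsh_mul, walsh_two_pow]

lemma neg_one_pow_val_one_add (z : ZMod 2) : (-1 : ℝ) ^ (1 + z).val = -(-1) ^ z.val := by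
  fin_cases z
  · show (-1 : ℝ) ^ 1 = -(-1) ^ 0
    norm_num
  · show (-1 : ℝ) ^ 0 = -(-1) ^ 1
    norm_num

lemma walsh_single_add {m k : ℕ} (h : m.testBit k) (x : G) :
    walsh m (Pi.single k 1 + x) = -walsh m x := by
  have hk : k ∈ range (m + 1) :=
    mem_range.2 (Nat.lt_succ_of_le ((Nat.lt_two_pow_self).le.trans (Nat.ge_two_pow_of_testBit h)))
  rw [walsh, walsh, ← mul_prod_erase _ _ hk, ← mul_prod_erase _ _ hk, neg_mul_eq_neg_mul]
  congr 1
  · simp [h, neg_one_pow_val_one_add]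
  · refine prod_congr rfl fun j hj => ?_
    simp [Pi.single_eq_of_ne (mem_erase.1 hj).1]

lemma integral_walsh (m : ℕ) : ∫ y, walsh m y ∂haarG = if m = 0 then 1 else 0 := by
  split_ifs with hm
  · simp [hm, walsh_zero]
  · obtain ⟨k, hk, -⟩ := Nat.exists_most_significant_bit hm
    -- Translation by `Pi.single k 1` preserves `haarG` but negates `walsh m`.
    have hneg : ∫ y, walsh m (Pi.single k 1 + y) ∂haarG = -∫ y, walsh m y ∂haarG := by
      rw [← integral_neg]
      exact integral_congr_ae (Filter.Eventually.of_forall (walsh_single_add hk))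
    linarith [(integral_add_left_eq_self (μ := haarG) (walsh m) (Pi.single k 1)).symm.trans hneg]

lemma integral_walsh_mul_walsh (i j : ℕ) :
    ∫ y, walsh i y * walsh j y ∂haarG = if i = j then 1 else 0 := by
  simp_rw [walsh_mul, integral_walsh, Nat.xor_eq_zero_iff]

lemma integral_sum_walsh_mul_walsh (s : Finset ℕ) (i : ℕ) :
    ∫ y, (∑ k ∈ s, walsh k y) * walsh i y ∂haarG = if i ∈ s then 1 else 0 := by
  simp_rw [sum_mul]
  rw [integral_finsetSum _ fun k _ => by simpa only [walsh_mul] using walsh_integrable (k ^^^ i)]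
  simp_rw [integral_walsh_mul_walsh, sum_ite_eq']

lemma integral_dirichlet {m : ℕ} (hm : 0 < m) : ∫ y, dirichlet m y ∂haarG = 1 := by
  unfold dirichlet
  rw [integral_finsetSum _ fun k _ => walsh_integrable k]
  simp_rw [integral_walsh, sum_ite_eq', if_pos (mem_range.2 hm)]

lemma dirichlet_two_pow_succ (m : ℕ) (x : G) :
    dirichlet (2 ^ (m + 1)) x = (1 + (-1 : ℝ) ^ (x m).val) * dirichlet (2 ^ m) x := by
  have hblock : ∑ i ∈ range (2 ^ m), walsh (2 ^ m + i) x
      = (-1 : ℝ) ^ (x m).val * dirichlet (2 ^ m) x := by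
    rw [dirichlet, mul_sum]
    exact sum_congr rfl fun i hi => walsh_two_pow_add (mem_range.1 hi) x
  rw [dirichlet, pow_succ, mul_two, sum_range_add, ← dirichlet, hblock]
  ring

lemma mem_IN_succ {m : ℕ} {x : G} : x ∈ IN (m + 1) ↔ x ∈ IN m ∧ x m = 0 := by
  simp only [IN, Set.mem_ofPred_eq, Nat.lt_succ_iff_lt_or_eq, or_imp, forall_and, forall_eq]

lemma isClosed_IN (m : ℕ) : IsClosed (IN m) := by
  simp only [IN, Set.ofPred_forall]
  exact isClosed_iInter fun j => isClosed_iInter fun _ =>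
    isClosed_eq (continuous_apply j) continuous_const

lemma dirichlet_two_pow (m : ℕ) : dirichlet (2 ^ m) = (IN m).indicator fun _ => (2 : ℝ) ^ m := by
  funext x
  induction m with
  | zero => simp [dirichlet, walsh_zero, IN]
  | succ m ih =>
    rw [dirichlet_two_pow_succ, ih]
    by_cases hx : x ∈ IN m
    · obtain h0 | h1 : x m = 0 ∨ x m = 1 := by generalize x m = z; revert z; decide
      · simp [hx, h0, mem_IN_succ.2 ⟨hx, h0⟩, pow_succ, mul_comm, one_add_one_eq_two]
      · simp [hx, h1, mem_IN_succ, ZMod.val_one]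
    · simp [hx, mem_IN_succ]

lemma dirichlet_two_pow_nonneg (m : ℕ) (x : G) : 0 ≤ dirichlet (2 ^ m) x := by
  rw [dirichlet_two_pow]
  exact Set.indicator_nonneg (fun _ _ => by positivity) x

lemma abs_dirichlet_two_pow_succ_sub (m : ℕ) (x : G) :
    |dirichlet (2 ^ (m + 1)) x - dirichlet (2 ^ m) x| = dirichlet (2 ^ m) x := by
  rw [dirichlet_two_pow_succ, show ∀ s d : ℝ, (1 + s) * d - d = s * d by intros; ring, abs_mul,
    abs_pow, abs_neg, abs_one, one_pow, one_mul, abs_of_nonneg (dirichlet_two_pow_nonneg m x)]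

lemma measureReal_IN (m : ℕ) : haarG.real (IN m) = ((2 : ℝ) ^ m)⁻¹ := by
  have h := integral_dirichlet (Nat.two_pow_pos m)
  rw [dirichlet_two_pow, integral_indicator_const _ (isClosed_IN m).measurableSet, smul_eq_mul] at h
  exact eq_inv_of_mul_eq_one_left h

lemma eLpNorm_dirichlet_two_pow (m : ℕ) {p : ℝ} (hp : 0 < p) :
    eLpNorm (dirichlet (2 ^ m)) (ENNReal.ofReal p) haarG
      = ENNReal.ofReal ((2 : ℝ) ^ ((m : ℝ) * (1 - 1 / p))) := by
  rw [dirichlet_two_pow, eLpNorm_indicator_const (isClosed_IN m).measurableSet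
      (ENNReal.ofReal_pos.2 hp).ne' ENNReal.ofReal_ne_top, ENNReal.toReal_ofReal hp.le,
    ← ofReal_measureReal, measureReal_IN, Real.enorm_eq_ofReal (by positivity),
    ENNReal.ofReal_rpow_of_nonneg (by positivity) (by positivity),
    ← ENNReal.ofReal_mul (by positivity)]
  congr 1
  rw [← Real.rpow_natCast, ← Real.rpow_neg zero_le_two, ← Real.rpow_mul zero_le_two,
    ← Real.rpow_add two_pos]
  congr 1
  ring

lemma range_two_pow_inter_Ico (k m : ℕ) :
    range (2 ^ k) ∩ Ico (2 ^ m) (2 ^ (m + 1)) = if k ≤ m then ∅ else Ico (2 ^ m) (2 ^ (m + 1)) := by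
  rw [range_eq_Ico, Ico_inter_Ico, max_eq_right (Nat.zero_le _)]
  split_ifs with hk
  · exact Ico_eq_empty_of_le (min_le_left _ _ |>.trans (Nat.pow_le_pow_right two_pos hk))
  · rw [min_eq_right (Nat.pow_le_pow_right two_pos (by omega))]

lemma ciSup_ite_le_zero {b : ℝ} (hb : 0 ≤ b) (m : ℕ) : ⨆ k : ℕ, (if k ≤ m then 0 else b) = b :=
  ciSup_eq_of_forall_le_of_forall_lt_exists_gt (fun k => by split_ifs <;> simp [hb])
    fun _ hw => ⟨m + 1, by simpa using hw⟩

/-- **`H_p`-norm bound for the example function** `f_n = D_{2^{2n+1}} − D_{2^{2n}}`: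
the maximal function `f_n* = sup_k |S_{2^k} f_n|` equals `|f_n|` pointwise, and there is
a constant `c > 0` with `‖f_n*‖_p ≤ c · 2^{2n(1−1/p)}` for all `0 < p ≤ 1`; in particular
`‖f_n*‖_{1/2} ≤ c · 2^{−2n}`. -/
theorem example_martingale_hardy_norm :
    ∃ c : ℝ, 0 < c ∧ ∀ (n : ℕ) (f : G → ℝ),
      (∀ y, f y = dirichlet (2 ^ (2 * n + 1)) y - dirichlet (2 ^ (2 * n)) y) →
      ∀ (fhat : ℕ → ℝ), (∀ i, fhat i = ∫ y, f y * walsh i y ∂haarG) →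
      ∀ (S : ℕ → G → ℝ), (∀ j y, S j y = ∑ k ∈ Finset.range j, fhat k * walsh k y) →
      (∀ x, (⨆ k : ℕ, |S (2 ^ k) x|) = |f x|) ∧
      (∀ p : ℝ, 0 < p → p ≤ 1 →
        eLpNorm (fun x => ⨆ k : ℕ, |S (2 ^ k) x|) (ENNReal.ofReal p) haarG
          ≤ ENNReal.ofReal (c * (2 : ℝ) ^ ((2 * n : ℝ) * (1 - 1 / p)))) ∧
      eLpNorm (fun x => ⨆ k : ℕ, |S (2 ^ k) x|) (ENNReal.ofReal (1 / 2)) haarG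
        ≤ ENNReal.ofReal (c * (2 : ℝ) ^ (-(2 * n : ℝ))) := by
  refine ⟨1, one_pos, fun n f hf fhat hfhat S hS => ?_⟩
  set m := 2 * n
  have hf_sum : ∀ y, f y = ∑ k ∈ Ico (2 ^ m) (2 ^ (m + 1)), walsh k y := fun y => by
    rw [hf, sum_Ico_eq_sub _ (Nat.pow_le_pow_right two_pos m.le_succ)]
    rfl
  have hfhat_eq : ∀ i, fhat i = if i ∈ Ico (2 ^ m) (2 ^ (m + 1)) then 1 else 0 := fun i => by
    simp_rw [hfhat, hf_sum]
    exact integral_sum_walsh_mul_walsh _ i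
  have hS_eq : ∀ k x, S (2 ^ k) x = if k ≤ m then 0 else f x := fun k x => by
    simp_rw [hS, hfhat_eq, ite_mul, one_mul, zero_mul, sum_ite_mem, range_two_pow_inter_Ico, hf_sum]
    split_ifs <;> simp
  have hmax : ∀ x, ⨆ k : ℕ, |S (2 ^ k) x| = |f x| := fun x => by
    simp_rw [hS_eq, apply_ite abs, abs_zero]
    exact ciSup_ite_le_zero (abs_nonneg _) m
  have hmax_eq : (fun x => ⨆ k : ℕ, |S (2 ^ k) x|) = dirichlet (2 ^ m) :=
    funext fun x => by rw [hmax, hf, abs_dirichlet_two_pow_succ_sub]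
  have hbound : ∀ p : ℝ, 0 < p → p ≤ 1 →
      eLpNorm (fun x => ⨆ k : ℕ, |S (2 ^ k) x|) (ENNReal.ofReal p) haarG
        ≤ ENNReal.ofReal (1 * (2 : ℝ) ^ ((2 * n : ℝ) * (1 - 1 / p))) := fun p hp _ => by
    rw [hmax_eq, eLpNorm_dirichlet_two_pow m hp, one_mul]
    push_cast [m]
    rfl
  refine ⟨hmax, hbound, ?_⟩
  convert hbound (1 / 2) (by norm_num) (by norm_num) using 4
  ring
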